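/- Improvement of subsolutions (Theorem 3.1, fixed-point part): with Ȳ, M̄, r̄ as in the improvement construction, if in addition Ȳ_i = Y_i P-a.s. for all i = j+1,...,J (where Y is the true solution and j ∈ {0,...,J-1}), then E_j[θ_j^{low}(r̄,M)] = θ_j^{low}(r̄,M̄) = Y_j P-a.s. for any M ∈ M_D. -/

import Mathlib

open MeasureTheory
open scoped ENNReal

noncomputable section

variable {Ω : Type*} {m0 : MeasurableSpace Ω}

/-- `L^{∞-}`: membership in `L^p` for every finite `p ≥ 1`. -/
def MemLinfMinus {E : Type*} [NormedAddCommGroup E] (μ : Measure Ω) (f : Ω → E) : Prop :=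
  ∀ p : ℝ≥0∞, 1 ≤ p → p ≠ ⊤ → MemLp f p μ

/-- Euclidean dot product on `Fin D → ℝ`. -/
def dotp {D : ℕ} (x y : Fin D → ℝ) : ℝ := ∑ d, x d * y d

/-- Componentwise conditional expectation of an `ℝ^D`-valued random vector. -/
def cexpV (μ : Measure Ω) (m : MeasurableSpace Ω) {D : ℕ} (f : Ω → Fin D → ℝ) :
    Ω → Fin D → ℝ :=
  fun ω d => (μ[fun ω' => f ω' d|m]) ω

/-- The `ℝ^D`-valued process `β_j Y_j` (vector weight times scalar process). -/
def bprod {D : ℕ} (β : ℕ → Ω → Fin D → ℝ) (Y : ℕ → Ω → ℝ) (j : ℕ) : Ω → Fin D → ℝ :=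
  fun ω d => β j ω d * Y j ω

/-- Convex (Fenchel) conjugate, with values in `EReal`. -/
def econj {D : ℕ} (f : (Fin D → ℝ) → ℝ) (u : Fin D → ℝ) : EReal :=
  ⨆ z : Fin D → ℝ, ((dotp u z - f z : ℝ) : EReal)

/-- Real-valued version of the convex conjugate (meaningful where the conjugate is finite). -/
def rconj {D : ℕ} (f : (Fin D → ℝ) → ℝ) (u : Fin D → ℝ) : ℝ := (econj f u).toReal

/-- The Doob martingale of an `ℝ^D`-valued process `Z`:
`j ↦ ∑_{i=0}^{j-1} (Z_{i+1} - E_i[Z_{i+1}])`. -/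
def doobMart (μ : Measure Ω) (ℱ : Filtration ℕ m0) {D : ℕ} (Z : ℕ → Ω → Fin D → ℝ) :
    ℕ → Ω → Fin D → ℝ :=
  fun j ω d => ∑ i ∈ Finset.range j, (Z (i + 1) ω d - cexpV μ (ℱ i) (Z (i + 1)) ω d)

/-- Standing assumptions on the data `(F, β, ξ)` of the convex dynamic program:
measurability, adaptedness and convexity of the generator, polynomial growth with an
`L^{∞-}` coefficient, and integrability/adaptedness of the weights and terminal condition. -/
structure Setting (μ : Measure Ω) (ℱ : Filtration ℕ m0) (J D : ℕ)
    (F : ℕ → Ω → (Fin D → ℝ) → ℝ) (β : ℕ → Ω → Fin D → ℝ) (ξ : Ω → ℝ) : Prop where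
  F_meas : ∀ j < J, Measurable fun p : Ω × (Fin D → ℝ) => F j p.1 p.2
  F_adapted : ∀ j < J, ∀ z : Fin D → ℝ, StronglyMeasurable[ℱ j] fun ω => F j ω z
  F_convex : ∀ j < J, ∀ ω, ConvexOn ℝ Set.univ (F j ω)
  F_growth : ∃ q : ℝ, 0 ≤ q ∧ ∃ α : ℕ → Ω → ℝ,
      (∀ j < J, StronglyMeasurable[ℱ j] (α j)) ∧
      (∀ j < J, ∀ᵐ ω ∂μ, 0 ≤ α j ω) ∧ (∀ j < J, MemLinfMinus μ (α j)) ∧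
      ∀ j < J, ∀ z : Fin D → ℝ, ∀ᵐ ω ∂μ, |F j ω z| ≤ α j ω * (1 + ‖z‖ ^ q)
  β_adapted : ∀ j ≤ J, StronglyMeasurable[ℱ j] (β j)
  β_int : ∀ j ≤ J, MemLinfMinus μ (β j)
  ξ_meas : StronglyMeasurable[ℱ J] ξ
  ξ_int : MemLinfMinus μ ξ

/-- `Y` is an adapted `L^{∞-}` solution of the dynamic programming equation
`Y_j = F_j(E_j[β_{j+1} Y_{j+1}])`, `Y_J = ξ`. -/
def IsSolution (μ : Measure Ω) (ℱ : Filtration ℕ m0) (J D : ℕ)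
    (F : ℕ → Ω → (Fin D → ℝ) → ℝ) (β : ℕ → Ω → Fin D → ℝ) (ξ : Ω → ℝ)
    (Y : ℕ → Ω → ℝ) : Prop :=
  (∀ j ≤ J, StronglyMeasurable[ℱ j] (Y j) ∧ MemLinfMinus μ (Y j)) ∧
  (∀ᵐ ω ∂μ, Y J ω = ξ ω) ∧
  (∀ j < J, ∀ᵐ ω ∂μ, Y j ω = F j ω (cexpV μ (ℱ j) (bprod β Y (j + 1)) ω))

/-- Supersolution of the dynamic program. -/
def IsSupersolution (μ : Measure Ω) (ℱ : Filtration ℕ m0) (J D : ℕ)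
    (F : ℕ → Ω → (Fin D → ℝ) → ℝ) (β : ℕ → Ω → Fin D → ℝ) (ξ : Ω → ℝ)
    (Y : ℕ → Ω → ℝ) : Prop :=
  (∀ j ≤ J, StronglyMeasurable[ℱ j] (Y j) ∧ MemLinfMinus μ (Y j)) ∧
  (∀ᵐ ω ∂μ, ξ ω ≤ Y J ω) ∧
  (∀ j < J, ∀ᵐ ω ∂μ, F j ω (cexpV μ (ℱ j) (bprod β Y (j + 1)) ω) ≤ Y j ω)

/-- Subsolution of the dynamic program. -/
def IsSubsolution (μ : Measure Ω) (ℱ : Filtration ℕ m0) (J D : ℕ)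
    (F : ℕ → Ω → (Fin D → ℝ) → ℝ) (β : ℕ → Ω → Fin D → ℝ) (ξ : Ω → ℝ)
    (Y : ℕ → Ω → ℝ) : Prop :=
  (∀ j ≤ J, StronglyMeasurable[ℱ j] (Y j) ∧ MemLinfMinus μ (Y j)) ∧
  (∀ᵐ ω ∂μ, Y J ω ≤ ξ ω) ∧
  (∀ j < J, ∀ᵐ ω ∂μ, Y j ω ≤ F j ω (cexpV μ (ℱ j) (bprod β Y (j + 1)) ω))

/-- The monotonicity assumption: `Y⁽¹⁾ ≥ Y⁽²⁾` a.s. implies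
`F_j(β_{j+1} Y⁽¹⁾) ≥ F_j(β_{j+1} Y⁽²⁾)` a.s. -/
def MonoAssumption (μ : Measure Ω) (J D : ℕ)
    (F : ℕ → Ω → (Fin D → ℝ) → ℝ) (β : ℕ → Ω → Fin D → ℝ) : Prop :=
  ∀ j < J, ∀ Y1 Y2 : Ω → ℝ, MemLinfMinus μ Y1 → MemLinfMinus μ Y2 →
    (∀ᵐ ω ∂μ, Y2 ω ≤ Y1 ω) →
    ∀ᵐ ω ∂μ, F j ω (fun d => β (j + 1) ω d * Y2 ω) ≤ F j ω (fun d => β (j + 1) ω d * Y1 ω)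

/-- The class `M_D` of `ℝ^D`-valued `L^{∞-}` martingales. -/
def IsMartD (μ : Measure Ω) (ℱ : Filtration ℕ m0) {D : ℕ}
    (M : ℕ → Ω → Fin D → ℝ) : Prop :=
  Martingale M ℱ μ ∧ ∀ j, MemLinfMinus μ (M j)

/-- Admissible controls on the time indices `{j₀, ..., J-1}` (the class `A_{j₀}`). -/
def IsAdmissibleFrom (μ : Measure Ω) (ℱ : Filtration ℕ m0) (j₀ J D : ℕ)
    (F : ℕ → Ω → (Fin D → ℝ) → ℝ) (r : ℕ → Ω → Fin D → ℝ) : Prop :=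
  ∀ i, j₀ ≤ i → i < J →
    StronglyMeasurable[ℱ i] (r i) ∧ MemLinfMinus μ (r i) ∧
    (∀ᵐ ω ∂μ, econj (F i ω) (r i ω) ≠ ⊤) ∧
    MemLinfMinus μ (fun ω => rconj (F i ω) (r i ω))

/-- The lower pathwise recursion `θ^{low}(r, M)`:
`θ_J = ξ`, `θ_i = r_i^⊤ (β_{i+1} θ_{i+1}) - r_i^⊤ ΔM_{i+1} - F_i^{#}(r_i)`,
required on the time indices `{j₀, ..., J-1}`. -/
def IsThetaLowFrom (μ : Measure Ω) (j₀ J D : ℕ)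
    (F : ℕ → Ω → (Fin D → ℝ) → ℝ) (β : ℕ → Ω → Fin D → ℝ) (ξ : Ω → ℝ)
    (r M : ℕ → Ω → Fin D → ℝ) (θ : ℕ → Ω → ℝ) : Prop :=
  (∀ᵐ ω ∂μ, θ J ω = ξ ω) ∧
  ∀ i, j₀ ≤ i → i < J → ∀ᵐ ω ∂μ,
    θ i ω = dotp (r i ω) (fun d => β (i + 1) ω d * θ (i + 1) ω)
      - dotp (r i ω) (fun d => M (i + 1) ω d - M i ω d) - rconj (F i ω) (r i ω)

/-- The upper pathwise recursion `θ^{up}(M)`: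
`θ_J = ξ`, `θ_j = F_j(β_{j+1} θ_{j+1} - ΔM_{j+1})`. -/
def IsThetaUp (μ : Measure Ω) (J D : ℕ)
    (F : ℕ → Ω → (Fin D → ℝ) → ℝ) (β : ℕ → Ω → Fin D → ℝ) (ξ : Ω → ℝ)
    (M : ℕ → Ω → Fin D → ℝ) (θ : ℕ → Ω → ℝ) : Prop :=
  (∀ᵐ ω ∂μ, θ J ω = ξ ω) ∧
  ∀ j < J, ∀ᵐ ω ∂μ,
    θ j ω = F j ω (fun d => β (j + 1) ω d * θ (j + 1) ω - (M (j + 1) ω d - M j ω d))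

/-- The optimality condition `r_i^⊤ E_i[β_{i+1} Y_{i+1}] - F_i^{#}(r_i) = F_i(E_i[β_{i+1} Y_{i+1}])`
on the time indices `{j₀, ..., J-1}`. -/
def OptimalityCond (μ : Measure Ω) (ℱ : Filtration ℕ m0) (j₀ J D : ℕ)
    (F : ℕ → Ω → (Fin D → ℝ) → ℝ) (β : ℕ → Ω → Fin D → ℝ)
    (Y : ℕ → Ω → ℝ) (r : ℕ → Ω → Fin D → ℝ) : Prop :=
  ∀ i, j₀ ≤ i → i < J → ∀ᵐ ω ∂μ,
    dotp (r i ω) (cexpV μ (ℱ i) (bprod β Y (i + 1)) ω) - rconj (F i ω) (r i ω)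
      = F i ω (cexpV μ (ℱ i) (bprod β Y (i + 1)) ω)

/-!
Along `θ^low(r̄, M̄)` the Doob increment `ΔM̄_{i+1} = β_{i+1}Ȳ_{i+1} - E_i[β_{i+1}Ȳ_{i+1}]`
removes the noise from `β_{i+1}θ_{i+1}` as soon as `θ_{i+1} = Ȳ_{i+1}`, so that
`θ_i = r̄_iᵀ E_i[β_{i+1}Ȳ_{i+1}] - F_i^#(r̄_i) = F_i(E_i[β_{i+1}Ȳ_{i+1}])` by the choice of `r̄`,
and this is `Y_i` because `Ȳ_{i+1} = Y_{i+1}`. For an arbitrary martingale `M`, conditioning on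
`ℱ_i` kills `r̄_iᵀ ΔM_{i+1}` and, by the tower property, replaces `θ_{i+1}` by
`E_{i+1}[θ_{i+1}] = Y_{i+1}`, and the same identity gives `E_i[θ_i] = Y_i`. Both claims follow
by backward induction from `i = J`.

The conjugate `F_i^#(r̄_i)` is not known to be `ℱ_i`-measurable a priori; the same identity
exhibits it a.s. as the `ℱ_i`-measurable `r̄_iᵀ E_i[β_{i+1}Ȳ_{i+1}] - Y_i`.
-/

open Filter

section LinfMinus

variable {μ : Measure Ω} {E F G : Type*} [NormedAddCommGroup E] [NormedAddCommGroup F]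
  [NormedAddCommGroup G]

lemma MemLinfMinus.integrable {f : Ω → E} (hf : MemLinfMinus μ f) : Integrable f μ :=
  memLp_one_iff_integrable.mp (hf 1 le_rfl ENNReal.one_ne_top)

lemma MemLinfMinus.ae_eq {f g : Ω → E} (hfg : f =ᵐ[μ] g) (hf : MemLinfMinus μ f) :
    MemLinfMinus μ g :=
  fun p hp hp_top => (hf p hp hp_top).ae_eq hfg

lemma MemLinfMinus.sub {f g : Ω → E} (hf : MemLinfMinus μ f) (hg : MemLinfMinus μ g) :
    MemLinfMinus μ (f - g) :=
  fun p hp hp_top => (hf p hp hp_top).sub (hg p hp hp_top)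

lemma MemLinfMinus.of_bilin [NormedSpace ℝ E] [NormedSpace ℝ F] [NormedSpace ℝ G]
    (B : E →L[ℝ] F →L[ℝ] G) {f : Ω → E} {g : Ω → F} (hf : MemLinfMinus μ f)
    (hg : MemLinfMinus μ g) : MemLinfMinus μ (fun ω => B (f ω) (g ω)) := by
  intro p hp hp_top
  have h2p : 1 ≤ 2 * p := hp.trans (le_mul_of_one_le_left zero_le one_le_two)
  have h2p_top : 2 * p ≠ ⊤ := ENNReal.mul_ne_top ENNReal.ofNat_ne_top hp_top
  have : ENNReal.HolderTriple (2 * p) (2 * p) p := ⟨by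
    rw [ENNReal.mul_inv (by simp) (by simp), ← two_mul, ← mul_assoc,
      ENNReal.mul_inv_cancel two_ne_zero ENNReal.ofNat_ne_top, one_mul]⟩
  exact B.memLp_of_bilin p (hf _ h2p h2p_top) (hg _ h2p h2p_top)

end LinfMinus

section Dotp

variable {D : ℕ}

def dotpCLM (D : ℕ) : (Fin D → ℝ) →L[ℝ] (Fin D → ℝ) →L[ℝ] ℝ :=
  LinearMap.toContinuousLinearMap
    (LinearMap.toContinuousLinearMap.toLinearMap ∘ₗ dotProductBilin ℝ ℝ)

@[simp]
lemma dotpCLM_apply (x y : Fin D → ℝ) : dotpCLM D x y = dotp x y := by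
  simp [dotpCLM, dotp, dotProduct]

lemma dotp_sub_right (x y z : Fin D → ℝ) : dotp x (y - z) = dotp x y - dotp x z := by
  simp only [← dotpCLM_apply, map_sub]

lemma MeasureTheory.StronglyMeasurable.dotp {m : MeasurableSpace Ω} {f g : Ω → Fin D → ℝ}
    (hf : StronglyMeasurable[m] f) (hg : StronglyMeasurable[m] g) :
    StronglyMeasurable[m] fun ω => dotp (f ω) (g ω) := by
  simpa using (dotpCLM D).continuous₂.comp_stronglyMeasurable (hf.prodMk hg)

variable {μ : Measure Ω}

lemma MemLinfMinus.dotp {f g : Ω → Fin D → ℝ} (hf : MemLinfMinus μ f)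
    (hg : MemLinfMinus μ g) : MemLinfMinus μ (fun ω => dotp (f ω) (g ω)) := by
  simpa using MemLinfMinus.of_bilin (dotpCLM D) hf hg

lemma bprod_eq_smul (β : ℕ → Ω → Fin D → ℝ) (Y : ℕ → Ω → ℝ) (j : ℕ) :
    bprod β Y j = Y j • β j := by
  ext ω d
  simp [bprod, mul_comm]

lemma bprod_ae_eq {β : ℕ → Ω → Fin D → ℝ} {Y Y' : ℕ → Ω → ℝ} {j : ℕ} (h : Y j =ᵐ[μ] Y' j) :
    bprod β Y j =ᵐ[μ] bprod β Y' j :=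
  h.mono fun ω hω => by ext d; simp only [bprod, hω]

lemma MemLinfMinus.bprod {β : ℕ → Ω → Fin D → ℝ} {Y : ℕ → Ω → ℝ} {j : ℕ}
    (hβ : MemLinfMinus μ (β j)) (hY : MemLinfMinus μ (Y j)) :
    MemLinfMinus μ (bprod β Y j) := by
  rw [bprod_eq_smul]
  exact MemLinfMinus.of_bilin (ContinuousLinearMap.lsmul ℝ ℝ) hY hβ

end Dotp

section CondExp

variable {μ : Measure Ω} {m : MeasurableSpace Ω} {D : ℕ}

lemma stronglyMeasurable_cexpV (f : Ω → Fin D → ℝ) : StronglyMeasurable[m] (cexpV μ m f) :=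
  (measurable_pi_iff.mpr fun d => (stronglyMeasurable_condExp (m := m) (μ := μ)
    (f := fun ω => f ω d)).measurable).stronglyMeasurable

lemma cexpV_congr_ae {f g : Ω → Fin D → ℝ} (hfg : f =ᵐ[μ] g) : cexpV μ m f =ᵐ[μ] cexpV μ m g := by
  have h : ∀ d, (μ[fun ω => f ω d|m]) =ᵐ[μ] μ[fun ω => g ω d|m] := fun d =>
    condExp_congr_ae (hfg.mono fun ω hω => congrFun hω d)
  filter_upwards [ae_all_iff.mpr h] with ω hω
  exact funext hω

lemma cexpV_ae_eq_condExp {f : Ω → Fin D → ℝ} (hf : Integrable f μ) :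
    cexpV μ m f =ᵐ[μ] μ[f|m] := by
  have h : ∀ d, (μ[fun ω => f ω d|m]) =ᵐ[μ] fun ω => (μ[f|m]) ω d := fun d =>
    ((ContinuousLinearMap.proj (R := ℝ) (φ := fun _ : Fin D => ℝ) d).comp_condExp_comm hf).symm
  filter_upwards [ae_all_iff.mpr h] with ω hω
  exact funext hω

lemma condExp_dotp_of_stronglyMeasurable_left {r X : Ω → Fin D → ℝ}
    (hr : StronglyMeasurable[m] r) (hrX : Integrable (fun ω => dotp (r ω) (X ω)) μ)
    (hX : Integrable X μ) :
    μ[fun ω => dotp (r ω) (X ω)|m] =ᵐ[μ] fun ω => dotp (r ω) (μ[X|m] ω) := by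
  simp_rw [← dotpCLM_apply] at hrX ⊢
  exact condExp_bilin_of_stronglyMeasurable_left (dotpCLM D) hr hrX hX

lemma condExp_smul_condExp_of_le {E : Type*} [NormedAddCommGroup E] [NormedSpace ℝ E]
    [CompleteSpace E] {m' : MeasurableSpace Ω} (hmm' : m ≤ m') (hm' : m' ≤ m0)
    [SigmaFinite (μ.trim hm')] {f : Ω → ℝ} {g : Ω → E} (hg : StronglyMeasurable[m'] g)
    (hfg : Integrable (f • g) μ) (hf : Integrable f μ) :
    μ[μ[f|m'] • g|m] =ᵐ[μ] μ[f • g|m] :=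
  calc μ[μ[f|m'] • g|m] =ᵐ[μ] μ[μ[f • g|m']|m] :=
        condExp_congr_ae (condExp_smul_of_aestronglyMeasurable_right hf hfg
          hg.aestronglyMeasurable).symm
    _ =ᵐ[μ] μ[f • g|m] := condExp_condExp_of_le hmm' hm'

lemma MeasureTheory.Martingale.condExp_sub_ae_eq_zero {ι E : Type*} [Preorder ι]
    [NormedAddCommGroup E] [NormedSpace ℝ E] [CompleteSpace E] {ℱ : Filtration ι m0}
    {M : ι → Ω → E} [SigmaFiniteFiltration μ ℱ] (hM : Martingale M ℱ μ) {i j : ι} (hij : i ≤ j) :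
    μ[M j - M i|ℱ i] =ᵐ[μ] 0 := by
  filter_upwards [condExp_sub (hM.integrable j) (hM.integrable i) (ℱ i), hM.condExp_ae_eq hij]
    with ω h_sub h_mart
  rw [h_sub, Pi.sub_apply, h_mart, condExp_of_stronglyMeasurable (ℱ.le i)
    (hM.stronglyMeasurable i) (hM.integrable i), sub_self, Pi.zero_apply]

end CondExp

lemma doobMart_succ_sub (μ : Measure Ω) (ℱ : Filtration ℕ m0) {D : ℕ}
    (Z : ℕ → Ω → Fin D → ℝ) (i : ℕ) (ω : Ω) :
    doobMart μ ℱ Z (i + 1) ω - doobMart μ ℱ Z i ω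
      = Z (i + 1) ω - cexpV μ (ℱ i) (Z (i + 1)) ω := by
  ext d
  simp only [doobMart, Finset.sum_range_succ, Pi.sub_apply]
  ring

section ThetaLow

variable {μ : Measure Ω} {ℱ : Filtration ℕ m0} {j₀ J D : ℕ} {F : ℕ → Ω → (Fin D → ℝ) → ℝ}
  {β r M : ℕ → Ω → Fin D → ℝ} {ξ : Ω → ℝ} {θ Y Ybar : ℕ → Ω → ℝ} {i : ℕ}

lemma IsThetaLowFrom.ae_eq_dotp (hθ : IsThetaLowFrom μ j₀ J D F β ξ r M θ) (hi : j₀ ≤ i)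
    (hiJ : i < J) :
    θ i =ᵐ[μ] fun ω => dotp (r i ω) ((bprod β θ (i + 1) - (M (i + 1) - M i)) ω)
      - rconj (F i ω) (r i ω) := by
  filter_upwards [hθ.2 i hi hiJ] with ω h
  rw [h, ← dotp_sub_right]
  rfl

lemma IsThetaLowFrom.terminal_ae_eq (hθ : IsThetaLowFrom μ j₀ J D F β ξ r M θ)
    (hY : IsSolution μ ℱ J D F β ξ Y) : θ J =ᵐ[μ] Y J :=
  EventuallyEq.trans hθ.1 (EventuallyEq.symm hY.2.1)

lemma IsThetaLowFrom.memLinfMinus (hθ : IsThetaLowFrom μ j₀ J D F β ξ r M θ)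
    (hξ : MemLinfMinus μ ξ) (hr : IsAdmissibleFrom μ ℱ j₀ J D F r)
    (hβ : ∀ i ≤ J, MemLinfMinus μ (β i)) (hM : ∀ i, MemLinfMinus μ (M i))
    (hi : j₀ ≤ i) (hiJ : i ≤ J) : MemLinfMinus μ (θ i) := by
  refine Nat.decreasingInduction' (P := fun k => MemLinfMinus μ (θ k))
    (fun k hkJ hik ih => ?_) hiJ (hξ.ae_eq (EventuallyEq.symm hθ.1))
  obtain ⟨-, hrk, -, hCk⟩ := hr k (hi.trans hik) hkJ
  exact ((hrk.dotp (((hβ (k + 1) hkJ).bprod ih).sub ((hM _).sub (hM _)))).sub hCk).ae_eq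
    (hθ.ae_eq_dotp (hi.trans hik) hkJ).symm

lemma IsThetaLowFrom.condExp_ae_eq [IsFiniteMeasure μ] (hθ : IsThetaLowFrom μ j₀ J D F β ξ r M θ)
    (hr : IsAdmissibleFrom μ ℱ j₀ J D F r) (hβ : StronglyMeasurable[ℱ (i + 1)] (β (i + 1)))
    (hβL : MemLinfMinus μ (β (i + 1))) (hM : IsMartD μ ℱ M) (hi : j₀ ≤ i) (hiJ : i < J)
    (hθL : MemLinfMinus μ (θ (i + 1))) (hθY : μ[θ (i + 1)|ℱ (i + 1)] =ᵐ[μ] Y (i + 1)) :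
    μ[θ i|ℱ i] =ᵐ[μ] fun ω => dotp (r i ω) (μ[bprod β Y (i + 1)|ℱ i] ω)
      - μ[fun ω => rconj (F i ω) (r i ω)|ℱ i] ω := by
  obtain ⟨hr_meas, hrL, -, hCL⟩ := hr i hi hiJ
  have hbL : MemLinfMinus μ (bprod β θ (i + 1)) := hβL.bprod hθL
  have hΔL : MemLinfMinus μ (M (i + 1) - M i) := (hM.2 _).sub (hM.2 _)
  have hXL := hbL.sub hΔL
  have hb : μ[bprod β θ (i + 1)|ℱ i] =ᵐ[μ] μ[bprod β Y (i + 1)|ℱ i] := by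
    simp only [bprod_eq_smul] at hbL ⊢
    exact (condExp_smul_condExp_of_le (ℱ.mono i.le_succ) (ℱ.le _) hβ hbL.integrable
      hθL.integrable).symm.trans (condExp_congr_ae (hθY.smul .rfl))
  have hX : μ[bprod β θ (i + 1) - (M (i + 1) - M i)|ℱ i] =ᵐ[μ] μ[bprod β Y (i + 1)|ℱ i] := by
    filter_upwards [condExp_sub hbL.integrable hΔL.integrable (ℱ i), hb,
      Martingale.condExp_sub_ae_eq_zero hM.1 i.le_succ] with ω h_sub h_b h_Δ
    rw [h_sub, Pi.sub_apply, h_b, h_Δ, Pi.zero_apply, sub_zero]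
  calc μ[θ i|ℱ i]
      =ᵐ[μ] μ[(fun ω => dotp (r i ω) ((bprod β θ (i + 1) - (M (i + 1) - M i)) ω))
          - fun ω => rconj (F i ω) (r i ω)|ℱ i] :=
        condExp_congr_ae (hθ.ae_eq_dotp hi hiJ)
    _ =ᵐ[μ] μ[fun ω => dotp (r i ω) ((bprod β θ (i + 1) - (M (i + 1) - M i)) ω)|ℱ i]
          - μ[fun ω => rconj (F i ω) (r i ω)|ℱ i] :=
        condExp_sub (hrL.dotp hXL).integrable hCL.integrable _
    _ =ᵐ[μ] _ := by
      filter_upwards [condExp_dotp_of_stronglyMeasurable_left hr_meas (hrL.dotp hXL).integrable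
        hXL.integrable, hX] with ω h_pull h_X
      rw [Pi.sub_apply, h_pull, h_X]

lemma IsThetaLowFrom.doobMart_ae_eq_generator
    (hθ : IsThetaLowFrom μ j₀ J D F β ξ r (doobMart μ ℱ (bprod β Ybar)) θ)
    (hopt : OptimalityCond μ ℱ j₀ J D F β Ybar r) (hi : j₀ ≤ i) (hiJ : i < J)
    (hθY : θ (i + 1) =ᵐ[μ] Ybar (i + 1)) :
    θ i =ᵐ[μ] fun ω => F i ω (cexpV μ (ℱ i) (bprod β Ybar (i + 1)) ω) := by
  filter_upwards [hθ.ae_eq_dotp hi hiJ, hθY, hopt i hi hiJ] with ω h_rec h_Y h_opt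
  have h_b : bprod β θ (i + 1) ω = bprod β Ybar (i + 1) ω := by
    ext d
    simp only [bprod, h_Y]
  rw [h_rec, ← h_opt, Pi.sub_apply, Pi.sub_apply, doobMart_succ_sub, h_b, sub_sub_cancel]

lemma IsSolution.generator_ae_eq (hY : IsSolution μ ℱ J D F β ξ Y) (hiJ : i < J)
    (hYbar : Ybar (i + 1) =ᵐ[μ] Y (i + 1)) :
    (fun ω => F i ω (cexpV μ (ℱ i) (bprod β Ybar (i + 1)) ω)) =ᵐ[μ] Y i := by
  have hV : cexpV μ (ℱ i) (bprod β Ybar (i + 1)) =ᵐ[μ] cexpV μ (ℱ i) (bprod β Y (i + 1)) :=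
    cexpV_congr_ae (bprod_ae_eq hYbar)
  filter_upwards [hV, hY.2.2 i hiJ] with ω h_V h_Y
  rw [h_V, h_Y]

lemma OptimalityCond.condExp_rconj_ae_eq [IsFiniteMeasure μ]
    (hopt : OptimalityCond μ ℱ j₀ J D F β Ybar r)
    (hr : IsAdmissibleFrom μ ℱ j₀ J D F r) (hY : StronglyMeasurable[ℱ i] (Y i))
    (hi : j₀ ≤ i) (hiJ : i < J)
    (hF : (fun ω => F i ω (cexpV μ (ℱ i) (bprod β Ybar (i + 1)) ω)) =ᵐ[μ] Y i) :
    μ[fun ω => rconj (F i ω) (r i ω)|ℱ i]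
      =ᵐ[μ] fun ω => dotp (r i ω) (cexpV μ (ℱ i) (bprod β Ybar (i + 1)) ω) - Y i ω := by
  obtain ⟨hr_meas, -, -, hCL⟩ := hr i hi hiJ
  have hC : (fun ω => rconj (F i ω) (r i ω))
      =ᵐ[μ] fun ω => dotp (r i ω) (cexpV μ (ℱ i) (bprod β Ybar (i + 1)) ω) - Y i ω := by
    filter_upwards [hopt i hi hiJ, hF] with ω h_opt h_F
    linarith
  refine (condExp_congr_ae hC).trans (condExp_of_stronglyMeasurable (ℱ.le i) ?_ ?_).eventuallyEq
  · exact (StronglyMeasurable.dotp hr_meas (stronglyMeasurable_cexpV _)).sub hY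
  · exact hCL.integrable.congr hC

end ThetaLow

theorem subsolution_improvement_fixed_point_general
    (μ : Measure Ω) [IsProbabilityMeasure μ] (ℱ : Filtration ℕ m0)
    (J D : ℕ) (F : ℕ → Ω → (Fin D → ℝ) → ℝ) (β : ℕ → Ω → Fin D → ℝ) (ξ : Ω → ℝ)
    (hset : Setting μ ℱ J D F β ξ)
    (Y : ℕ → Ω → ℝ) (hY : IsSolution μ ℱ J D F β ξ Y)
    (Ybar : ℕ → Ω → ℝ)
    (r : ℕ → Ω → Fin D → ℝ)
    (hr : IsAdmissibleFrom μ ℱ 0 J D F r)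
    (hropt : OptimalityCond μ ℱ 0 J D F β Ybar r)
    (M : ℕ → Ω → Fin D → ℝ) (hM : IsMartD μ ℱ M)
    (θ θbar : ℕ → Ω → ℝ)
    (hθ : IsThetaLowFrom μ 0 J D F β ξ r M θ)
    (hθbar : IsThetaLowFrom μ 0 J D F β ξ r (doobMart μ ℱ (bprod β Ybar)) θbar)
    (j : ℕ) (hj : j < J)
    (heq : ∀ i, j + 1 ≤ i → i ≤ J → Ybar i =ᵐ[μ] Y i) :
    (μ[θ j|ℱ j]) =ᵐ[μ] Y j ∧ θbar j =ᵐ[μ] Y j := by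
  have hF : ∀ i, j ≤ i → i < J →
      (fun ω => F i ω (cexpV μ (ℱ i) (bprod β Ybar (i + 1)) ω)) =ᵐ[μ] Y i :=
    fun i hji hiJ => hY.generator_ae_eq hiJ (heq (i + 1) (by omega) hiJ)
  constructor
  · refine Nat.decreasingInduction' (P := fun i => μ[θ i|ℱ i] =ᵐ[μ] Y i)
      (fun i hiJ hji ih => ?_) hj.le ?_
    · have hθL := hθ.memLinfMinus hset.ξ_int hr hset.β_int hM.2 (i + 1).zero_le hiJ
      have hV : μ[bprod β Y (i + 1)|ℱ i] =ᵐ[μ] cexpV μ (ℱ i) (bprod β Ybar (i + 1)) :=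
        (cexpV_ae_eq_condExp ((hset.β_int _ hiJ).bprod (hY.1 _ hiJ).2).integrable).symm.trans
          (cexpV_congr_ae (bprod_ae_eq (heq (i + 1) (by omega) hiJ)).symm)
      filter_upwards [hθ.condExp_ae_eq hr (hset.β_adapted _ hiJ) (hset.β_int _ hiJ) hM
          i.zero_le hiJ hθL ih,
        hropt.condExp_rconj_ae_eq hr (hY.1 i hiJ.le).1 i.zero_le hiJ (hF i hji hiJ), hV]
        with ω h_θ h_C h_V
      rw [h_θ, h_C, h_V, sub_sub_cancel]
    · calc μ[θ J|ℱ J] =ᵐ[μ] μ[Y J|ℱ J] := condExp_congr_ae (hθ.terminal_ae_eq hY)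
        _ = Y J := condExp_of_stronglyMeasurable (ℱ.le J) (hY.1 J le_rfl).1
          (hY.1 J le_rfl).2.integrable
  · refine Nat.decreasingInduction' (P := fun i => θbar i =ᵐ[μ] Y i)
      (fun i hiJ hji ih => ?_) hj.le (hθbar.terminal_ae_eq hY)
    exact (hθbar.doobMart_ae_eq_generator hropt i.zero_le hiJ
      (ih.trans (heq (i + 1) (by omega) hiJ).symm)).trans (hF i hji hiJ)

/-- Improvement of subsolutions, fixed-point part: with `Ȳ`, `M̄` (the Doob
martingale of `βȲ`) and `r̄` as in the improvement construction, if `Ȳ_i = Y_i` a.s. for all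
`i = j+1,…,J`, then `E_j[θ_j^{low}(r̄,M)] = θ_j^{low}(r̄,M̄) = Y_j` `P`-a.s. for any `M ∈ M_D`. -/
theorem subsolution_improvement_fixed_point
    (μ : Measure Ω) [IsProbabilityMeasure μ] (ℱ : Filtration ℕ m0)
    (J D : ℕ) (F : ℕ → Ω → (Fin D → ℝ) → ℝ) (β : ℕ → Ω → Fin D → ℝ) (ξ : Ω → ℝ)
    (hset : Setting μ ℱ J D F β ξ) (hmono : MonoAssumption μ J D F β)
    (Y : ℕ → Ω → ℝ) (hY : IsSolution μ ℱ J D F β ξ Y)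
    (Ybar : ℕ → Ω → ℝ) (hYbar : IsSubsolution μ ℱ J D F β ξ Ybar)
    (r : ℕ → Ω → Fin D → ℝ)
    (hr : IsAdmissibleFrom μ ℱ 0 J D F r)
    (hropt : OptimalityCond μ ℱ 0 J D F β Ybar r)
    (M : ℕ → Ω → Fin D → ℝ) (hM : IsMartD μ ℱ M)
    (θ θbar : ℕ → Ω → ℝ)
    (hθ : IsThetaLowFrom μ 0 J D F β ξ r M θ)
    (hθbar : IsThetaLowFrom μ 0 J D F β ξ r (doobMart μ ℱ (bprod β Ybar)) θbar)
    (j : ℕ) (hj : j < J)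
    (heq : ∀ i, j + 1 ≤ i → i ≤ J → Ybar i =ᵐ[μ] Y i) :
    (μ[θ j|ℱ j]) =ᵐ[μ] Y j ∧ θbar j =ᵐ[μ] Y j :=
  subsolution_improvement_fixed_point_general μ ℱ J D F β ξ hset Y hY Ybar r hr hropt M hM θ θbar hθ
    hθbar j hj heq
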